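/- ex_3(n, B_2 K_3) = (1 + o(1))·n²/2: the maximum number of hyperedges in a 3-uniform hypergraph on n vertices with no 2-wise Berge triangle is asymptotically n²/2. -/

import Mathlib

open Finset

/-- `H` contains a `t`-heavy copy of the graph `F`: an injective placement of `V(F)`
such that every edge of `F` is contained in at least `t` hyperedges of `H`. -/
def HasHeavyCopy {V α : Type*} [DecidableEq V] (H : Finset (Finset V))
    (F : SimpleGraph α) (t : ℕ) : Prop :=
  ∃ i : α ↪ V, ∀ x y, F.Adj x y →
    t ≤ (H.filter (fun A => i x ∈ A ∧ i y ∈ A)).card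

/-- `H` contains a `t`-wise Berge copy of the graph `F`: an injective placement of `V(F)`
together with `t` hyperedges assigned to each edge of `F`, pairwise disjoint over distinct
edges, each containing both endpoints of its edge. -/
def HasBergeCopy {V α : Type*} (H : Finset (Finset V))
    (F : SimpleGraph α) (t : ℕ) : Prop :=
  ∃ (i : α ↪ V) (h : Sym2 α → Finset (Finset V)),
    (∀ e ∈ F.edgeSet, h e ⊆ H ∧ (h e).card = t ∧ ∀ A ∈ h e, ∀ x ∈ e, i x ∈ A) ∧
    ∀ e ∈ F.edgeSet, ∀ e' ∈ F.edgeSet, e ≠ e' → Disjoint (h e) (h e')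

/-- The Turán number of `t`-heavy copies of `F` for `r`-uniform hypergraphs on `n` vertices. -/
noncomputable def exHeavy {α : Type*} (n r t : ℕ) (F : SimpleGraph α) : ℕ :=
  sSup {m | ∃ H : Finset (Finset (Fin n)), (∀ A ∈ H, A.card = r) ∧
    ¬ HasHeavyCopy H F t ∧ H.card = m}

/-- The Turán number of `t`-wise Berge copies of `F` for `r`-uniform hypergraphs on `n` vertices. -/
noncomputable def exBerge {α : Type*} (n r t : ℕ) (F : SimpleGraph α) : ℕ :=
  sSup {m | ∃ H : Finset (Finset (Fin n)), (∀ A ∈ H, A.card = r) ∧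
    ¬ HasBergeCopy H F t ∧ H.card = m}

/-- `G` contains a copy of `F` as a subgraph. -/
def GraphContains {α β : Type*} (F : SimpleGraph α) (G : SimpleGraph β) : Prop :=
  ∃ f : α ↪ β, ∀ x y, F.Adj x y → G.Adj (f x) (f y)

/-- The number of `r`-cliques of `G`. -/
noncomputable def cliqueCount {β : Type*} [Fintype β] [DecidableEq β]
    (r : ℕ) (G : SimpleGraph β) : ℕ :=
  letI := Classical.decRel G.Adj
  (G.cliqueFinset r).card

/-- The number of edges of `G`. -/
noncomputable def edgeCount {β : Type*} [Fintype β] [DecidableEq β] (G : SimpleGraph β) : ℕ :=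
  letI := Classical.decRel G.Adj
  G.edgeFinset.card

/-- The generalized Turán number `ex(n, K_r, F)`. -/
noncomputable def exClique {α : Type*} (n r : ℕ) (F : SimpleGraph α) : ℕ :=
  sSup {m | ∃ G : SimpleGraph (Fin n), ¬ GraphContains F G ∧ cliqueCount r G = m}

/-- The Turán number `ex(n, F)`. -/
noncomputable def exTuran {α : Type*} (n : ℕ) (F : SimpleGraph α) : ℕ :=
  sSup {m | ∃ G : SimpleGraph (Fin n), ¬ GraphContains F G ∧ edgeCount G = m}

/-!
Upper bound: let the codegree `d(p)` of a pair `p` be the number of hyperedges containing it,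
and let every hyperedge send weight `1 / d(p)` to each of its three pairs. A covered pair
receives total weight exactly `1`, so `|H| ≤ n.choose 2` as soon as every hyperedge sends weight
at least `1`. One that sends less has two pairs of codegree at least `3` and a third of codegree
at least `2`; since a hyperedge through two of these pairs is the hyperedge itself, two
hyperedges per pair can be chosen greedily and disjointly, which is a 2-wise Berge triangle.

Lower bound: the triples through a fixed vertex `z`. Some edge of a triangle avoids `z`, and
only one such triple contains it.
-/

open Filter Topology

theorem le_card_sdiff_of_inter_subset_singleton {α : Type*} [DecidableEq α] {X Y : Finset α}
    {c : α} {k : ℕ} (hX : k + 1 ≤ #X) (h : X ∩ Y ⊆ {c}) : k ≤ #(X \ Y) := by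
  have := card_le_card h
  rw [card_singleton] at this
  have := card_sdiff_add_card_inter X Y
  omega

theorem eq_of_mem_of_card_eq_three {V : Type*} [DecidableEq V] {A : Finset V} (hA : #A = 3)
    {u v w : V} (huv : u ≠ v) (huw : u ≠ w) (hvw : v ≠ w) (hu : u ∈ A) (hv : v ∈ A)
    (hw : w ∈ A) : A = {u, v, w} :=
  (eq_of_subset_of_card_le (by simp [insert_subset_iff, *])
    (by rw [hA, card_eq_three.2 ⟨u, v, w, huv, huw, hvw, rfl⟩])).symm

theorem sum_powersetCard_two_triple {V M : Type*} [DecidableEq V] [AddCommMonoid M]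
    {u v w : V} (huv : u ≠ v) (huw : u ≠ w) (hvw : v ≠ w) (f : Finset V → M) :
    ∑ p ∈ ({u, v, w} : Finset V).powersetCard 2, f p = f {u, v} + f {u, w} + f {v, w} := by
  have hpairs : ({u, v, w} : Finset V).powersetCard 2 = {{v, w}, {u, v}, {u, w}} := by
    rw [powersetCard_succ_insert (by simp [huv, huw]), powersetCard_one,
      show Nat.succ 1 = #{v, w} from (card_pair hvw).symm, powersetCard_self]
    simp only [map_insert, map_singleton, image_insert, image_singleton]
    rfl
  have h₁ : ({u, v} : Finset V) ≠ {u, w} :=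
    ne_of_mem_of_not_mem' (mem_insert_of_mem (mem_singleton_self v)) (by simp [huv.symm, hvw])
  have h₂ : ({v, w} : Finset V) ∉ ({{u, v}, {u, w}} : Finset (Finset V)) := by
    have : u ∉ ({v, w} : Finset V) := by simp [huv, huw]
    simp only [mem_insert, mem_singleton, not_or]
    exact ⟨fun h => this (h ▸ mem_insert_self u _), fun h => this (h ▸ mem_insert_self u _)⟩
  rw [hpairs, sum_insert h₂, sum_pair h₁, add_comm]

theorem one_le_inv_add_inv_add_inv {a b c : ℕ} (ha : 1 ≤ a) (hb : 1 ≤ b) (hc : 1 ≤ c)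
    (hab : 3 ≤ a → 3 ≤ b → c ≤ 1) (hac : 3 ≤ a → 3 ≤ c → b ≤ 1)
    (hbc : 3 ≤ b → 3 ≤ c → a ≤ 1) :
    (1 : ℚ) ≤ (a : ℚ)⁻¹ + (b : ℚ)⁻¹ + (c : ℚ)⁻¹ := by
  have one : ∀ x : ℕ, x = 1 → (1 : ℚ) ≤ (x : ℚ)⁻¹ := by rintro _ rfl; simp
  have half : ∀ x : ℕ, 1 ≤ x → x ≤ 2 → (1 / 2 : ℚ) ≤ (x : ℚ)⁻¹ := fun x h₁ h₂ => by
    rw [one_div]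
    exact inv_anti₀ (by positivity) (by exact_mod_cast h₂)
  have ha' : (0 : ℚ) ≤ (a : ℚ)⁻¹ := by positivity
  have hb' : (0 : ℚ) ≤ (b : ℚ)⁻¹ := by positivity
  have hc' : (0 : ℚ) ≤ (c : ℚ)⁻¹ := by positivity
  have : a = 1 ∨ b = 1 ∨ c = 1 ∨ (a ≤ 2 ∧ b ≤ 2) ∨ (a ≤ 2 ∧ c ≤ 2) ∨ (b ≤ 2 ∧ c ≤ 2) := by
    omega
  rcases this with h | h | h | ⟨h, h'⟩ | ⟨h, h'⟩ | ⟨h, h'⟩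
  · linarith [one a h]
  · linarith [one b h]
  · linarith [one c h]
  · linarith [half a ha h, half b hb h']
  · linarith [half a ha h, half c hc h']
  · linarith [half b hb h, half c hc h']

theorem edgeSet_top_fin_three {e : Sym2 (Fin 3)} (he : e ∈ (⊤ : SimpleGraph (Fin 3)).edgeSet) :
    e = s(0, 1) ∨ e = s(0, 2) ∨ e = s(1, 2) := by
  induction e using Sym2.ind
  revert he
  simp only [SimpleGraph.mem_edgeSet, SimpleGraph.top_adj, Sym2.eq_iff]
  decide +revert

theorem hasBergeCopy_top_fin_three {V : Type*} {H : Finset (Finset V)} {t : ℕ} {u v w : V}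
    (huv : u ≠ v) (huw : u ≠ w) (hvw : v ≠ w) {Suv Suw Svw : Finset (Finset V)}
    (hSuv : Suv ⊆ H ∧ #Suv = t ∧ ∀ A ∈ Suv, u ∈ A ∧ v ∈ A)
    (hSuw : Suw ⊆ H ∧ #Suw = t ∧ ∀ A ∈ Suw, u ∈ A ∧ w ∈ A)
    (hSvw : Svw ⊆ H ∧ #Svw = t ∧ ∀ A ∈ Svw, v ∈ A ∧ w ∈ A)
    (h₁ : Disjoint Suv Suw) (h₂ : Disjoint Suv Svw) (h₃ : Disjoint Suw Svw) :
    HasBergeCopy H (⊤ : SimpleGraph (Fin 3)) t := by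
  have hinj : Function.Injective ![u, v, w] := by
    intro x y hxy
    fin_cases x <;> fin_cases y <;> simp_all [eq_comm]
  let S : Sym2 (Fin 3) → Finset (Finset V) := fun e =>
    if e = s(0, 1) then Suv else if e = s(0, 2) then Suw else Svw
  refine ⟨⟨![u, v, w], hinj⟩, S, fun e he => ?_, fun e he e' he' hne => ?_⟩
  · rcases edgeSet_top_fin_three he with rfl | rfl | rfl <;> simp_all [S]
  · rcases edgeSet_top_fin_three he with rfl | rfl | rfl <;>
      rcases edgeSet_top_fin_three he' with rfl | rfl | rfl <;> simp_all [S, Disjoint.symm]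

section Codegree

variable {V : Type*} [DecidableEq V]

def codegree (H : Finset (Finset V)) (p : Finset V) : ℕ := #{A ∈ H | p ⊆ A}

theorem mem_filter_pair_subset_iff {H : Finset (Finset V)} {x y : V} {A : Finset V} :
    A ∈ {A ∈ H | {x, y} ⊆ A} ↔ A ∈ H ∧ x ∈ A ∧ y ∈ A := by
  rw [mem_filter, insert_subset_iff, singleton_subset_iff]

theorem hasBergeCopy_of_codegree {H : Finset (Finset V)} (hH : ∀ A ∈ H, #A = 3) {u v w : V}
    (huv : u ≠ v) (huw : u ≠ w) (hvw : v ≠ w) (h_uv : 3 ≤ codegree H {u, v})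
    (h_uw : 3 ≤ codegree H {u, w}) (h_vw : 2 ≤ codegree H {v, w}) :
    HasBergeCopy H (⊤ : SimpleGraph (Fin 3)) 2 := by
  have htriple : ∀ A ∈ H, u ∈ A → v ∈ A → w ∈ A → A ∈ ({{u, v, w}} : Finset (Finset V)) :=
    fun A hA hu hv hw =>
      mem_singleton.2 (eq_of_mem_of_card_eq_three (hH A hA) huv huw hvw hu hv hw)
  obtain ⟨Svw, hSvw, hSvw_card⟩ := exists_subset_card_eq h_vw
  have hSvw_mem A (hA : A ∈ Svw) := mem_filter_pair_subset_iff.1 (hSvw hA)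
  obtain ⟨Suw, hSuw, hSuw_card⟩ := exists_subset_card_eq <|
    le_card_sdiff_of_inter_subset_singleton (Y := Svw) h_uw fun A hA => by
      obtain ⟨hA, hA'⟩ := mem_inter.1 hA
      obtain ⟨hAH, hu, hw⟩ := mem_filter_pair_subset_iff.1 hA
      exact htriple A hAH hu (hSvw_mem A hA').2.1 hw
  have hSuw_mem A (hA : A ∈ Suw) := mem_filter_pair_subset_iff.1 (mem_sdiff.1 (hSuw hA)).1
  obtain ⟨Suv, hSuv, hSuv_card⟩ := exists_subset_card_eq <|
    le_card_sdiff_of_inter_subset_singleton (Y := Svw ∪ Suw) h_uv fun A hA => by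
      obtain ⟨hA, hA'⟩ := mem_inter.1 hA
      obtain ⟨hAH, hu, hv⟩ := mem_filter_pair_subset_iff.1 hA
      obtain hA' | hA' := mem_union.1 hA'
      exacts [htriple A hAH hu hv (hSvw_mem A hA').2.2, htriple A hAH hu hv (hSuw_mem A hA').2.2]
  have hSuv_mem A (hA : A ∈ Suv) := mem_filter_pair_subset_iff.1 (mem_sdiff.1 (hSuv hA)).1
  refine hasBergeCopy_top_fin_three huv huw hvw
    ⟨fun A hA => (hSuv_mem A hA).1, hSuv_card, fun A hA => (hSuv_mem A hA).2⟩
    ⟨fun A hA => (hSuw_mem A hA).1, hSuw_card, fun A hA => (hSuw_mem A hA).2⟩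
    ⟨fun A hA => (hSvw_mem A hA).1, hSvw_card, fun A hA => (hSvw_mem A hA).2⟩ ?_ ?_ ?_
  · exact disjoint_left.2 fun A hA hA' => (mem_sdiff.1 (hSuv hA)).2 (mem_union_right _ hA')
  · exact disjoint_left.2 fun A hA hA' => (mem_sdiff.1 (hSuv hA)).2 (mem_union_left _ hA')
  · exact disjoint_left.2 fun A hA hA' => (mem_sdiff.1 (hSuw hA)).2 hA'

theorem one_le_sum_inv_codegree {H : Finset (Finset V)} (hH : ∀ A ∈ H, #A = 3)
    (hfree : ¬ HasBergeCopy H (⊤ : SimpleGraph (Fin 3)) 2) {A : Finset V} (hA : A ∈ H) :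
    (1 : ℚ) ≤ ∑ p ∈ A.powersetCard 2, (codegree H p : ℚ)⁻¹ := by
  obtain ⟨u, v, w, huv, huw, hvw, rfl⟩ := card_eq_three.1 (hH A hA)
  have pos : ∀ p ⊆ {u, v, w}, 1 ≤ codegree H p := fun p hp =>
    card_pos.2 ⟨_, mem_filter.2 ⟨hA, hp⟩⟩
  have light {x y z : V} (hxy : x ≠ y) (hxz : x ≠ z) (hyz : y ≠ z)
      (h₁ : 3 ≤ codegree H {x, y}) (h₂ : 3 ≤ codegree H {x, z}) : codegree H {y, z} ≤ 1 := by
    by_contra! h₃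
    exact hfree (hasBergeCopy_of_codegree hH hxy hxz hyz h₁ h₂ h₃)
  rw [sum_powersetCard_two_triple huv huw hvw]
  refine one_le_inv_add_inv_add_inv (pos _ (by simp)) (pos _ (by simp)) (pos _ (by simp))
    (light huv huw hvw) (fun h₁ h₂ => ?_) (fun h₁ h₂ => ?_)
  · rw [pair_comm] at h₁
    exact light huv.symm hvw huw h₁ h₂
  · rw [pair_comm] at h₁ h₂
    exact light huw.symm hvw.symm huv h₁ h₂

theorem card_le_choose_two_of_not_hasBergeCopy [Fintype V] {H : Finset (Finset V)}
    (hH : ∀ A ∈ H, #A = 3) (hfree : ¬ HasBergeCopy H (⊤ : SimpleGraph (Fin 3)) 2) :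
    #H ≤ (Fintype.card V).choose 2 := by
  have : (#H : ℚ) ≤ (Fintype.card V).choose 2 := calc
    (#H : ℚ) = ∑ _A ∈ H, 1 := by simp
    _ ≤ ∑ A ∈ H, ∑ p ∈ A.powersetCard 2, (codegree H p : ℚ)⁻¹ :=
      sum_le_sum fun A hA => one_le_sum_inv_codegree hH hfree hA
    _ = ∑ p ∈ univ.powersetCard 2, ∑ A ∈ H with p ⊆ A, (codegree H p : ℚ)⁻¹ :=
      sum_comm' fun A p => by
        simp only [mem_powersetCard, mem_filter, subset_univ, true_and]
        tauto
    _ = ∑ p ∈ univ.powersetCard 2, (codegree H p : ℚ) * (codegree H p : ℚ)⁻¹ := by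
      simp [codegree]
    _ ≤ ∑ _p ∈ (univ : Finset V).powersetCard 2, 1 :=
      sum_le_sum fun p _ => mul_inv_le_one
    _ = (Fintype.card V).choose 2 := by simp
  exact_mod_cast this

end Codegree

section StarTriples

variable {V : Type*} [DecidableEq V] [Fintype V]

def starTriples (z : V) : Finset (Finset V) := ((univ.erase z).powersetCard 2).image (insert z)

theorem card_eq_three_of_mem_starTriples {z : V} {A : Finset V} (hA : A ∈ starTriples z) :
    #A = 3 := by
  obtain ⟨p, hp, rfl⟩ := mem_image.1 hA
  rw [mem_powersetCard, subset_erase] at hp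
  rw [card_insert_of_notMem hp.1.2, hp.2]

theorem mem_of_mem_starTriples {z : V} {A : Finset V} (hA : A ∈ starTriples z) : z ∈ A := by
  obtain ⟨p, -, rfl⟩ := mem_image.1 hA
  exact mem_insert_self z p

theorem card_starTriples (z : V) : #(starTriples z) = (Fintype.card V - 1).choose 2 := by
  rw [starTriples, card_image_of_injOn, card_powersetCard, card_erase_of_mem (mem_univ z),
    card_univ]
  intro p hp q hq hpq
  have hzp := (subset_erase.1 (mem_powersetCard.1 hp).1).2
  have hzq := (subset_erase.1 (mem_powersetCard.1 hq).1).2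
  rw [← erase_insert hzp, ← erase_insert hzq]
  exact congrArg (·.erase z) hpq

theorem not_hasBergeCopy_starTriples (z : V) :
    ¬ HasBergeCopy (starTriples z) (⊤ : SimpleGraph (Fin 3)) 2 := by
  rintro ⟨i, h, hcopy, -⟩
  obtain ⟨x, y, hxy, hx, hy⟩ : ∃ x y : Fin 3, x ≠ y ∧ i x ≠ z ∧ i y ≠ z := by
    have hne {a b : Fin 3} (hab : a ≠ b) (ha : i a = z) : i b ≠ z := fun hb =>
      hab (i.injective (ha.trans hb.symm))
    by_cases h0 : i 0 = z
    · exact ⟨1, 2, by decide, hne (by decide) h0, hne (by decide) h0⟩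
    by_cases h1 : i 1 = z
    · exact ⟨0, 2, by decide, h0, hne (by decide) h1⟩
    exact ⟨0, 1, by decide, h0, h1⟩
  obtain ⟨hsub, hcard, hmem⟩ := hcopy s(x, y) hxy
  have hunique : ∀ A ∈ h s(x, y), A = {z, i x, i y} := fun A hA =>
    eq_of_mem_of_card_eq_three (card_eq_three_of_mem_starTriples (hsub hA)) hx.symm hy.symm
      (i.injective.ne hxy) (mem_of_mem_starTriples (hsub hA))
      (hmem A hA x (Sym2.mem_mk_left x y)) (hmem A hA y (Sym2.mem_mk_right x y))
  have := card_le_one.2 fun A hA B hB => (hunique A hA).trans (hunique B hB).symm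
  omega

end StarTriples

theorem le_exBerge {n r t : ℕ} {α : Type*} {F : SimpleGraph α} {H : Finset (Finset (Fin n))}
    (hH : ∀ A ∈ H, #A = r) (hfree : ¬ HasBergeCopy H F t) : #H ≤ exBerge n r t F :=
  le_csSup ⟨Fintype.card (Finset (Fin n)), by rintro _ ⟨H', -, -, rfl⟩; exact card_le_univ H'⟩
    ⟨H, hH, hfree, rfl⟩

theorem exBerge_le {n r t N : ℕ} {α : Type*} {F : SimpleGraph α}
    (h : ∀ H : Finset (Finset (Fin n)), (∀ A ∈ H, #A = r) → ¬ HasBergeCopy H F t → #H ≤ N) :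
    exBerge n r t F ≤ N :=
  csSup_le' <| by rintro _ ⟨H, hH, hfree, rfl⟩; exact h H hH hfree

theorem tendsto_choose_two_sub_div_sq (k : ℕ) :
    Tendsto (fun n : ℕ => ((n - k).choose 2 : ℝ) / n ^ 2) atTop (𝓝 (1 / 2)) := by
  have h (c : ℝ) : Tendsto (fun n : ℕ => 1 - c / n) atTop (𝓝 1) := by
    simpa using tendsto_const_nhds.sub (tendsto_const_div_atTop_nhds_zero_nat c)
  refine Tendsto.congr' ?_ (by simpa using ((h k).mul (h (k + 1))).div_const 2)
  filter_upwards [eventually_gt_atTop k] with n hn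
  have hn0 : (n : ℝ) ≠ 0 := Nat.cast_ne_zero.2 (by omega)
  rw [Nat.cast_choose_two, Nat.cast_sub hn.le]
  field_simp
  ring

theorem exBerge_triangle :
    Filter.Tendsto
      (fun n : ℕ => (exBerge n 3 2 (⊤ : SimpleGraph (Fin 3)) : ℝ) / (n : ℝ) ^ 2)
      Filter.atTop (nhds (1 / 2)) := by
  refine tendsto_of_tendsto_of_tendsto_of_le_of_le' (tendsto_choose_two_sub_div_sq 1)
    (by simpa using tendsto_choose_two_sub_div_sq 0) ?_ (Eventually.of_forall fun n => ?_)
  · filter_upwards [eventually_gt_atTop 0] with n hn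
    have := le_exBerge (fun _ => card_eq_three_of_mem_starTriples)
      (not_hasBergeCopy_starTriples (⟨0, hn⟩ : Fin n))
    rw [card_starTriples, Fintype.card_fin] at this
    gcongr
  · have := exBerge_le fun H => card_le_choose_two_of_not_hasBergeCopy (V := Fin n) (H := H)
    rw [Fintype.card_fin] at this
    gcongr
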